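/- Let m₀ ∈ (0,1) be the unique root of m ↦ 2E(m) − K(m). The function f(m) := 2(2E(m) − K(m))·√(4m−2) on (1/2, 1) satisfies f(1/2) = 0, f(m₀) = 0, and f restricted to [m₀, 1) is a strictly decreasing bijection onto (−∞, 0]. -/

import Mathlib

/-!
With `g = 2E − K` one has `g m = ∫ ψ (1 − m sin²θ) dθ`, where `ψ u = 2√u − 1/√u = (2u − 1)/√u`
is strictly increasing; hence `g` strictly decreases on `m < 1` and is positive for `m ≤ 1/2`,
which forces `m₀ > 1/2`. On `[m₀, 1)`, `f = 2g · √(4m − 2)` is a nonpositive decreasing factor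
times a positive increasing one, so it strictly decreases. Since `E ≤ π/2` and
`√(1 − m sin²θ) ≤ √(1 − m) + (π/2 − θ)` gives `K m ≥ log (1 + π / (2√(1 − m)))`, `f → −∞` as
`m → 1⁻`, and the intermediate value theorem yields surjectivity onto `(−∞, 0]`.
-/

open Real

noncomputable def ellK (m : ℝ) : ℝ :=
  ∫ θ in (0:ℝ)..(π / 2), 1 / Real.sqrt (1 - m * Real.sin θ ^ 2)

noncomputable def ellE (m : ℝ) : ℝ :=
  ∫ θ in (0:ℝ)..(π / 2), Real.sqrt (1 - m * Real.sin θ ^ 2)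

open Set Filter Topology

lemma one_sub_mul_sin_sq_pos {m : ℝ} (hm : m < 1) (θ : ℝ) : 0 < 1 - m * sin θ ^ 2 := by
  rcases le_or_gt m 0 with hm0 | hm0
  · nlinarith [sq_nonneg (sin θ)]
  · nlinarith [mul_le_mul_of_nonneg_left (sin_sq_le_one θ) hm0.le]

lemma continuous_one_div_sqrt_one_sub_mul_sin_sq {m : ℝ} (hm : m < 1) :
    Continuous fun θ => 1 / √(1 - m * sin θ ^ 2) :=
  continuous_const.div (by fun_prop) fun θ => (sqrt_pos.2 (one_sub_mul_sin_sq_pos hm θ)).ne'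

lemma continuous_ellE : Continuous ellE :=
  intervalIntegral.continuous_parametric_intervalIntegral_of_continuous' (by fun_prop) _ _

lemma continuousOn_ellK : ContinuousOn ellK (Iio 1) := by
  rw [continuousOn_iff_continuous_domRestrict]
  refine intervalIntegral.continuous_parametric_intervalIntegral_of_continuous'
    (f := fun (m : Iio (1 : ℝ)) θ => 1 / √(1 - m * sin θ ^ 2)) ?_ _ _
  refine continuous_const.div (by fun_prop) fun p => ?_
  exact (sqrt_pos.2 (one_sub_mul_sin_sq_pos p.1.2 p.2)).ne'

lemma two_mul_ellE_sub_ellK_eq_integral {m : ℝ} (hm : m < 1) :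
    2 * ellE m - ellK m =
      ∫ θ in (0:ℝ)..(π / 2), (2 * √(1 - m * sin θ ^ 2) - 1 / √(1 - m * sin θ ^ 2)) := by
  rw [ellE, ellK, ← intervalIntegral.integral_const_mul, ← intervalIntegral.integral_sub
    ((Continuous.intervalIntegrable (by fun_prop) _ _).const_mul 2)
    ((continuous_one_div_sqrt_one_sub_mul_sin_sq hm).intervalIntegrable _ _)]

lemma two_mul_sqrt_sub_one_div_sqrt (u : ℝ) : 2 * √u - 1 / √u = (2 * u - 1) / √u := by
  rcases le_or_gt u 0 with hu | hu
  · simp [sqrt_eq_zero'.2 hu]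
  · have := sq_sqrt hu.le
    field_simp
    linarith

lemma strictMonoOn_two_mul_sqrt_sub_one_div_sqrt :
    StrictMonoOn (fun u => 2 * √u - 1 / √u) (Ioi 0) := by
  intro u (hu : 0 < u) v _ huv
  have hsqrt : √u < √v := sqrt_lt_sqrt hu.le huv
  have hinv : 1 / √v ≤ 1 / √u := one_div_le_one_div_of_le (sqrt_pos.2 hu) hsqrt.le
  dsimp only
  linarith

lemma strictAntiOn_two_mul_ellE_sub_ellK :
    StrictAntiOn (fun m => 2 * ellE m - ellK m) (Iio 1) := by
  intro a (ha : a < 1) b (hb : b < 1) hab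
  have hψ := strictMonoOn_two_mul_sqrt_sub_one_div_sqrt
  have hcont : ∀ {m : ℝ}, m < 1 → ContinuousOn
      (fun θ => 2 * √(1 - m * sin θ ^ 2) - 1 / √(1 - m * sin θ ^ 2)) (Icc 0 (π / 2)) :=
    fun hm => ((continuous_const.mul (by fun_prop)).sub
      (continuous_one_div_sqrt_one_sub_mul_sin_sq hm)).continuousOn
  dsimp only
  rw [two_mul_ellE_sub_ellK_eq_integral ha, two_mul_ellE_sub_ellK_eq_integral hb]
  refine intervalIntegral.integral_lt_integral_of_continuousOn_of_le_of_exists_lt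
    (by positivity) (hcont hb) (hcont ha) (fun θ _ => hψ.monotoneOn
      (one_sub_mul_sin_sq_pos hb θ) (one_sub_mul_sin_sq_pos ha θ) ?_)
    ⟨π / 2, ⟨by positivity, le_rfl⟩, hψ (one_sub_mul_sin_sq_pos hb _)
      (one_sub_mul_sin_sq_pos ha _) ?_⟩
  · nlinarith [sq_nonneg (sin θ)]
  · simp [hab]

lemma two_mul_ellE_sub_ellK_pos {m : ℝ} (hm : m ≤ 1 / 2) : 0 < 2 * ellE m - ellK m := by
  rw [two_mul_ellE_sub_ellK_eq_integral (by linarith)]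
  refine intervalIntegral.intervalIntegral_pos_of_pos_on
    (((continuous_const.mul (by fun_prop)).sub
      (continuous_one_div_sqrt_one_sub_mul_sin_sq (by linarith))).intervalIntegrable _ _)
    (fun θ hθ => ?_) (by positivity)
  have hcos : 0 < cos θ := cos_pos_of_mem_Ioo ⟨by linarith [hθ.1, pi_pos], hθ.2⟩
  have hsin : sin θ ^ 2 < 1 := by nlinarith [sin_sq_add_cos_sq θ]
  rw [two_mul_sqrt_sub_one_div_sqrt]
  exact div_pos (by nlinarith [sq_nonneg (sin θ)])
    (sqrt_pos.2 (one_sub_mul_sin_sq_pos (by linarith) θ))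

lemma ellE_le_pi_div_two {m : ℝ} (hm : 0 ≤ m) : ellE m ≤ π / 2 := by
  calc ellE m ≤ ∫ _ in (0:ℝ)..(π / 2), (1 : ℝ) :=
        intervalIntegral.integral_mono_on (by positivity)
          (Continuous.intervalIntegrable (by fun_prop) _ _) intervalIntegrable_const
          fun θ _ => sqrt_le_one.2 (by nlinarith [sq_nonneg (sin θ)])
    _ = π / 2 := by simp

lemma sqrt_one_sub_mul_sin_sq_le {m θ : ℝ} (hm1 : m ≤ 1) (hθ : θ ∈ Icc 0 (π / 2)) :
    √(1 - m * sin θ ^ 2) ≤ √(1 - m) + (π / 2 - θ) := by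
  have hcos : cos θ ≤ π / 2 - θ := by
    rw [← sin_pi_div_two_sub]
    exact sin_le (by linarith [hθ.2])
  have hcos0 : 0 ≤ cos θ := cos_nonneg_of_mem_Icc ⟨by linarith [hθ.1, pi_pos], hθ.2⟩
  have hsq := sq_sqrt (sub_nonneg.2 hm1)
  calc √(1 - m * sin θ ^ 2) = √((1 - m) + m * cos θ ^ 2) := by
        congr 1; linear_combination (-m) * sin_sq_add_cos_sq θ
    _ ≤ √(1 - m) + cos θ := by
        rw [sqrt_le_left (by positivity)]
        nlinarith [mul_nonneg (sqrt_nonneg (1 - m)) hcos0,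
          mul_le_mul_of_nonneg_right hm1 (sq_nonneg (cos θ))]
    _ ≤ √(1 - m) + (π / 2 - θ) := by linarith

lemma log_le_ellK {m : ℝ} (hm : m < 1) :
    log ((√(1 - m) + π / 2) / √(1 - m)) ≤ ellK m := by
  set c := √(1 - m)
  have hc : 0 < c := sqrt_pos.2 (by linarith)
  have hlog : ∫ θ in (0:ℝ)..(π / 2), (c + π / 2 - θ)⁻¹ = log ((c + π / 2) / c) := by
    rw [intervalIntegral.integral_comp_sub_left (fun x => x⁻¹), sub_zero, add_sub_cancel_right,
      integral_inv_of_pos hc (by positivity)]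
  rw [← hlog]
  refine intervalIntegral.integral_mono_on (by positivity) ?_
    ((continuous_one_div_sqrt_one_sub_mul_sin_sq hm).intervalIntegrable _ _) fun θ hθ => ?_
  · refine ContinuousOn.intervalIntegrable fun θ hθ => ?_
    rw [uIcc_of_le (by positivity)] at hθ
    exact (ContinuousAt.inv₀ (f := fun θ => c + π / 2 - θ) (by fun_prop)
      (by linarith [hθ.2])).continuousWithinAt
  · rw [one_div]
    refine inv_anti₀ (sqrt_pos.2 (one_sub_mul_sin_sq_pos hm θ)) ?_
    linarith [sqrt_one_sub_mul_sin_sq_le hm.le hθ]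

lemma tendsto_ellK_nhdsLT_one : Tendsto ellK (𝓝[<] 1) atTop := by
  have hc : Tendsto (fun m : ℝ => √(1 - m)) (𝓝[<] 1) (𝓝[>] 0) := by
    refine tendsto_nhdsWithin_of_tendsto_nhds_of_eventually_within _ ?_ ?_
    · exact (Continuous.tendsto' (by fun_prop) 1 0 (by simp)).mono_left nhdsWithin_le_nhds
    · filter_upwards [self_mem_nhdsWithin] with m (hm : m < 1)
      exact sqrt_pos.2 (by linarith)
  have hlog : Tendsto (fun c => log ((c + π / 2) / c)) (𝓝[>] 0) atTop := by
    refine tendsto_log_atTop.comp ?_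
    refine (tendsto_atTop_add_const_left _ 1
      (tendsto_inv_nhdsGT_zero.const_mul_atTop (by positivity : (0:ℝ) < π / 2))).congr' ?_
    filter_upwards [self_mem_nhdsWithin] with c (hc : 0 < c)
    field_simp
  refine tendsto_atTop_mono' _ ?_ (hlog.comp hc)
  filter_upwards [self_mem_nhdsWithin] with m (hm : m < 1)
  exact log_le_ellK hm

lemma tendsto_two_mul_ellE_sub_ellK_nhdsLT_one :
    Tendsto (fun m => 2 * ellE m - ellK m) (𝓝[<] 1) atBot := by
  refine tendsto_atBot_add_left_of_ge' _ π ?_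
    (tendsto_neg_atTop_atBot.comp tendsto_ellK_nhdsLT_one)
  filter_upwards [Ioo_mem_nhdsLT (zero_lt_one : (0:ℝ) < 1)] with m hm
  linarith [ellE_le_pi_div_two hm.1.le]

lemma StrictAntiOn.mul_monotoneOn_of_nonpos_of_pos {α : Type*} [Preorder α] {s : Set α}
    {f g : α → ℝ} (hf : StrictAntiOn f s) (hg : MonotoneOn g s) (hf0 : ∀ x ∈ s, f x ≤ 0)
    (hg0 : ∀ x ∈ s, 0 < g x) : StrictAntiOn (fun x => f x * g x) s := by
  intro a ha b hb hab
  calc f b * g b ≤ f b * g a := mul_le_mul_of_nonpos_left (hg ha hb hab.le) (hf0 b hb)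
    _ < f a * g a := mul_lt_mul_of_pos_right (hf ha hb hab) (hg0 a ha)

lemma StrictAntiOn.bijOn_Ico_Iic {α δ : Type*} [ConditionallyCompleteLinearOrder α]
    [TopologicalSpace α] [OrderTopology α] [DenselyOrdered α] [LinearOrder δ]
    [TopologicalSpace δ] [OrderClosedTopology δ] [NoMinOrder δ] {f : α → δ} {a b : α}
    (hab : a < b) (hf : StrictAntiOn f (Ico a b)) (hcont : ContinuousOn f (Ico a b))
    (hlim : Tendsto f (𝓝[<] b) atBot) : BijOn f (Ico a b) (Iic (f a)) := by
  have : (𝓝[<] b).NeBot := nhdsLT_neBot_of_exists_lt ⟨a, hab⟩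
  have ha : a ∈ Ico a b := left_mem_Ico.2 hab
  refine ⟨fun x hx => hf.antitoneOn ha hx hx.1, hf.injOn, fun y (hy : y ≤ f a) => ?_⟩
  obtain ⟨c, hcy, hc⟩ :=
    ((hlim.eventually (eventually_lt_atBot y)).and (Ioo_mem_nhdsLT hab)).exists
  have hsub : Icc a c ⊆ Ico a b := Icc_subset_Ico_right hc.2
  obtain ⟨x, hx, rfl⟩ := intermediate_value_Icc' hc.1.le (hcont.mono hsub) ⟨hcy.le, hy⟩
  exact ⟨x, hsub hx, rfl⟩

theorem wavelike_f_on_supercritical_general (m₀ : ℝ) (hm₀ : m₀ ∈ Set.Ioo (0:ℝ) 1)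
    (hroot : 2 * ellE m₀ - ellK m₀ = 0) :
    2 * (2 * ellE (1 / 2) - ellK (1 / 2)) * Real.sqrt (4 * (1 / 2) - 2) = 0 ∧
    2 * (2 * ellE m₀ - ellK m₀) * Real.sqrt (4 * m₀ - 2) = 0 ∧
    StrictAntiOn (fun m => 2 * (2 * ellE m - ellK m) * Real.sqrt (4 * m - 2))
      (Set.Ico m₀ 1) ∧
    Set.BijOn (fun m => 2 * (2 * ellE m - ellK m) * Real.sqrt (4 * m - 2))
      (Set.Ico m₀ 1) (Set.Iic (0:ℝ)) := by
  have hhalf : 1 / 2 < m₀ := by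
    by_contra! h
    exact (two_mul_ellE_sub_ellK_pos h).ne' hroot
  have hsub : Ico m₀ 1 ⊆ Iio 1 := fun m hm => hm.2
  have hg : StrictAntiOn (fun m => 2 * (2 * ellE m - ellK m)) (Ico m₀ 1) :=
    fun a ha b hb hab => by
      have := strictAntiOn_two_mul_ellE_sub_ellK ha.2 hb.2 hab
      dsimp only at this
      linarith
  have hg0 : ∀ m ∈ Ico m₀ 1, 2 * (2 * ellE m - ellK m) ≤ 0 := fun m hm => by
    have := strictAntiOn_two_mul_ellE_sub_ellK.antitoneOn hm₀.2 hm.2 hm.1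
    linarith
  have hanti := hg.mul_monotoneOn_of_nonpos_of_pos (g := fun m => √(4 * m - 2))
    (fun a _ b _ hab => sqrt_le_sqrt (by linarith)) hg0
    (fun m hm => sqrt_pos.2 (by linarith [hm.1]))
  have hf₀ : 2 * (2 * ellE m₀ - ellK m₀) * √(4 * m₀ - 2) = 0 := by simp [hroot]
  refine ⟨by norm_num, hf₀, hanti, ?_⟩
  rw [← hf₀]
  refine hanti.bijOn_Ico_Iic hm₀.2 ?_ ?_
  · exact ((continuousOn_const.mul ((continuousOn_const.mul continuous_ellE.continuousOn).sub
      continuousOn_ellK)).mono hsub).mul (Continuous.continuousOn (by fun_prop))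
  · have hsqrt : Tendsto (fun m : ℝ => √(4 * m - 2)) (𝓝[<] 1) (𝓝 √2) :=
      (Continuous.tendsto' (by fun_prop) 1 √2 (by norm_num)).mono_left nhdsWithin_le_nhds
    exact (tendsto_two_mul_ellE_sub_ellK_nhdsLT_one.const_mul_atBot two_pos).atBot_mul_pos
      (by positivity) hsqrt

theorem wavelike_f_on_supercritical (m₀ : ℝ) (hm₀ : m₀ ∈ Set.Ioo (0:ℝ) 1)
    (hroot : 2 * ellE m₀ - ellK m₀ = 0)
    (huniq : ∀ m ∈ Set.Ioo (0:ℝ) 1, 2 * ellE m - ellK m = 0 → m = m₀) :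
    2 * (2 * ellE (1 / 2) - ellK (1 / 2)) * Real.sqrt (4 * (1 / 2) - 2) = 0 ∧
    2 * (2 * ellE m₀ - ellK m₀) * Real.sqrt (4 * m₀ - 2) = 0 ∧
    StrictAntiOn (fun m => 2 * (2 * ellE m - ellK m) * Real.sqrt (4 * m - 2))
      (Set.Ico m₀ 1) ∧
    Set.BijOn (fun m => 2 * (2 * ellE m - ellK m) * Real.sqrt (4 * m - 2))
      (Set.Ico m₀ 1) (Set.Iic (0:ℝ)) :=
  wavelike_f_on_supercritical_general m₀ hm₀ hroot
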